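/- Any publishers game with the linear RRP ranking function r̂_i(x) = (1/n)·ν_i(x) + 1/n has an exact potential function given by φ(x) = Σ_{i=1}^n ( −g(d*(x_i)) − λ·d_0(x_i) ), where g(t) = t/n + 1/n; that is, for every player i, every x_{-i}, and all deviations x'_i, x''_i: φ(x'_i, x_{-i}) − φ(x''_i, x_{-i}) = u_i(x'_i, x_{-i}) − u_i(x''_i, x_{-i}). -/

import Mathlib

noncomputable section

/-- Relative relevance of player i at profile x, given the distance d* to the
information need. -/
def relRel (n k : ℕ) (dstar : (Fin k → ℝ) → ℝ) (x : Fin n → (Fin k → ℝ))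
    (i : Fin n) : ℝ :=
  (1 / ((n : ℝ) - 1)) * (∑ j ∈ Finset.univ.erase i, dstar (x j)) - dstar (x i)

/-- Linear RRP ranking function r̂_i = (1/n)·ν_i + 1/n. -/
def linRank (n k : ℕ) (dstar : (Fin k → ℝ) → ℝ) (x : Fin n → (Fin k → ℝ))
    (i : Fin n) : ℝ :=
  (1 / (n : ℝ)) * relRel n k dstar x i + 1 / (n : ℝ)

/-- Utility of publisher i: ranking probability minus λ times distance from the
initial document. -/
def util (n k : ℕ) (lam : ℝ) (dstar : (Fin k → ℝ) → ℝ)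
    (d0 : Fin n → (Fin k → ℝ) → ℝ) (x : Fin n → (Fin k → ℝ)) (i : Fin n) : ℝ :=
  linRank n k dstar x i - lam * d0 i (x i)

/-- The potential φ(x) = ∑_i (−g(d*(x_i)) − λ d_0(x_i)) with g(t) = t/n + 1/n. -/
def pot (n k : ℕ) (lam : ℝ) (dstar : (Fin k → ℝ) → ℝ)
    (d0 : Fin n → (Fin k → ℝ) → ℝ) (x : Fin n → (Fin k → ℝ)) : ℝ :=
  ∑ i, (-(dstar (x i) / (n : ℝ) + 1 / (n : ℝ)) - lam * d0 i (x i))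

/-! A deviation of player `i` changes `φ` only in its `i`-th summand, and changes `r̂_i` only
through the term `-d*(x_i)/n`, because the other players' average distance does not involve
`x_i`. Both differences therefore equal
`-(d*(x'_i) - d*(x''_i))/n - λ (d_0(x'_i) - d_0(x''_i))`. -/

open Function

theorem sum_comp_update_sub {ι β M : Type*} [Fintype ι] [DecidableEq ι] [AddCommGroup M]
    (f : ι → β → M) (x : ι → β) (i : ι) (a b : β) :
    ∑ j, f j (update x i a j) - ∑ j, f j (update x i b j) = f i a - f i b := by
  rw [← Finset.sum_sub_distrib, Finset.sum_eq_single_of_mem i (Finset.mem_univ i)]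
  · simp only [update_self]
  · intro j _ hji
    simp only [update_of_ne hji, sub_self]

theorem relRel_update_self (n k : ℕ) (dstar : (Fin k → ℝ) → ℝ)
    (x : Fin n → Fin k → ℝ) (i : Fin n) (v : Fin k → ℝ) :
    relRel n k dstar (update x i v) i =
      1 / ((n : ℝ) - 1) * ∑ j ∈ Finset.univ.erase i, dstar (x j) - dstar v := by
  rw [relRel, update_self]
  congr 2
  exact Finset.sum_congr rfl fun j hj => by rw [update_of_ne (Finset.ne_of_mem_erase hj)]

theorem linRank_update_self_sub (n k : ℕ) (dstar : (Fin k → ℝ) → ℝ)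
    (x : Fin n → Fin k → ℝ) (i : Fin n) (a b : Fin k → ℝ) :
    linRank n k dstar (update x i a) i - linRank n k dstar (update x i b) i =
      (dstar b - dstar a) / n := by
  simp only [linRank, relRel_update_self]
  ring

theorem linRank_exact_potential_general (n k : ℕ) (lam : ℝ)
    (dstar : (Fin k → ℝ) → ℝ)
    (d0 : Fin n → (Fin k → ℝ) → ℝ)
    (x : Fin n → (Fin k → ℝ)) (i : Fin n) (x' x'' : Fin k → ℝ) :
    pot n k lam dstar d0 (Function.update x i x') -
      pot n k lam dstar d0 (Function.update x i x'') =
    util n k lam dstar d0 (Function.update x i x') i -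
      util n k lam dstar d0 (Function.update x i x'') i := by
  calc _ = (-(dstar x' / n + 1 / n) - lam * d0 i x') -
          (-(dstar x'' / n + 1 / n) - lam * d0 i x'') :=
        sum_comp_update_sub (fun j y => -(dstar y / n + 1 / n) - lam * d0 j y) x i x' x''
    _ = (linRank n k dstar (Function.update x i x') i -
          linRank n k dstar (Function.update x i x'') i) - lam * (d0 i x' - d0 i x'') := by
        rw [linRank_update_self_sub]
        ring
    _ = _ := by
        simp only [util, Function.update_self]
        ring

/-- φ is an exact potential for the publishers game with the linear RRP
ranking function. -/
theorem linRank_exact_potential (n k : ℕ) (hn : 2 ≤ n) (lam : ℝ) (hlam : 0 < lam)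
    (dstar : (Fin k → ℝ) → ℝ) (hdstar : ∀ y, dstar y ∈ Set.Icc (0 : ℝ) 1)
    (d0 : Fin n → (Fin k → ℝ) → ℝ) (hd0 : ∀ i y, d0 i y ∈ Set.Icc (0 : ℝ) 1)
    (x : Fin n → (Fin k → ℝ)) (i : Fin n) (x' x'' : Fin k → ℝ) :
    pot n k lam dstar d0 (Function.update x i x') -
      pot n k lam dstar d0 (Function.update x i x'') =
    util n k lam dstar d0 (Function.update x i x') i -
      util n k lam dstar d0 (Function.update x i x'') i :=
  linRank_exact_potential_general n k lam dstar d0 x i x' x''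

end
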